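/- arXiv:2104.01961 — 9 statements merged into one kernel-verified Lean document; each statement's English description precedes it below -/
import Mathlib

section
/- For real numbers $\alpha > \beta > 0$, the function $t \mapsto \frac{t^{\beta}-1}{t^{\alpha}-1}$ is strictly decreasing on $(1,\infty)$. -/
open Real Set

private lemma aux_key (α β : ℝ) (hβ : 0 < β) (hαβ : β < α) {t : ℝ} (ht : 1 < t) :
    α * t ^ (-β) - β * t ^ (-α) < α - β := by
  have hα : 0 < α := hβ.trans hαβ
  have hanti : StrictAntiOn (fun t : ℝ => α * t ^ (-β) - β * t ^ (-α)) (Ici 1) := by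
    apply strictAntiOn_of_deriv_neg (convex_Ici 1)
    · intro x hx
      have hx0 : x ≠ 0 := by
        have : (0:ℝ) < x := lt_of_lt_of_le one_pos hx
        exact ne_of_gt this
      exact (((Real.hasDerivAt_rpow_const (Or.inl hx0)).const_mul α).sub
        ((Real.hasDerivAt_rpow_const (Or.inl hx0)).const_mul β)).continuousAt.continuousWithinAt
    · intro x hx
      rw [interior_Ici] at hx
      have hx1 : (1:ℝ) < x := hx
      have hx0 : x ≠ 0 := by positivity
      have hd : HasDerivAt (fun t : ℝ => α * t ^ (-β) - β * t ^ (-α))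
          (α * (-β * x ^ (-β - 1)) - β * (-α * x ^ (-α - 1))) x :=
        ((Real.hasDerivAt_rpow_const (Or.inl hx0)).const_mul α).sub
          ((Real.hasDerivAt_rpow_const (Or.inl hx0)).const_mul β)
      rw [hd.deriv]
      have hlt : x ^ (-α - 1) < x ^ (-β - 1) :=
        Real.rpow_lt_rpow_of_exponent_lt hx1 (by linarith)
      nlinarith [hlt, mul_pos hα hβ]
  have h1 : (1:ℝ) ∈ Ici (1:ℝ) := Set.self_mem_Ici
  have ht' : t ∈ Ici (1:ℝ) := le_of_lt ht
  have := hanti h1 ht' ht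
  simpa [Real.one_rpow] using this

theorem strict_anti_ratio_rpow (α β : ℝ) (hβ : 0 < β) (hαβ : β < α) :
    StrictAntiOn (fun t : ℝ => (t ^ β - 1) / (t ^ α - 1)) (Set.Ioi (1 : ℝ)) := by
  have hα : 0 < α := hβ.trans hαβ
  have hderiv : ∀ x ∈ Set.Ioi (1:ℝ),
      HasDerivAt (fun t : ℝ => (t ^ β - 1) / (t ^ α - 1))
        ((β * x ^ (β - 1) * (x ^ α - 1) - (x ^ β - 1) * (α * x ^ (α - 1))) /
          (x ^ α - 1) ^ 2) x := by
    intro x hx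
    have hx1 : (1:ℝ) < x := hx
    have hx0 : (0:ℝ) < x := lt_trans one_pos hx1
    have hxa : (1:ℝ) < x ^ α := (Real.one_lt_rpow_iff_of_pos hx0).2 (Or.inl ⟨hx1, hα⟩)
    have hne : x ^ α - 1 ≠ 0 := by linarith
    exact (((Real.hasDerivAt_rpow_const (Or.inl hx0.ne')).sub_const 1).div
      ((Real.hasDerivAt_rpow_const (Or.inl hx0.ne')).sub_const 1) hne)
  apply strictAntiOn_of_deriv_neg (convex_Ioi 1)
  · intro x hx
    exact (hderiv x hx).continuousAt.continuousWithinAt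
  · intro x hx
    rw [interior_Ioi] at hx
    rw [(hderiv x hx).deriv]
    have hx1 : (1:ℝ) < x := hx
    have hx0 : (0:ℝ) < x := lt_trans one_pos hx1
    have hxa : (1:ℝ) < x ^ α := (Real.one_lt_rpow_iff_of_pos hx0).2 (Or.inl ⟨hx1, hα⟩)
    apply div_neg_of_neg_of_pos _ (pow_pos (by linarith) 2)
    -- key inequality
    have key : α * x ^ (-β) - β * x ^ (-α) < α - β := aux_key α β hβ hαβ hx1
    have hP : (0:ℝ) < x ^ (α + β - 1) := Real.rpow_pos_of_pos hx0 _
    have key2 : α * (x ^ (-β) * x ^ (α + β - 1)) - β * (x ^ (-α) * x ^ (α + β - 1))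
        < (α - β) * x ^ (α + β - 1) := by nlinarith [key, hP]
    have e1 : x ^ (-β) * x ^ (α + β - 1) = x ^ (α - 1) := by
      rw [← Real.rpow_add hx0]; ring_nf
    have e2 : x ^ (-α) * x ^ (α + β - 1) = x ^ (β - 1) := by
      rw [← Real.rpow_add hx0]; ring_nf
    rw [e1, e2] at key2
    -- relate x ^ α, x ^ β to x ^ (α-1), x ^ (β-1)
    have eα : x ^ α = x ^ (α - 1) * x := by
      nth_rewrite 1 [show α = α - 1 + 1 by ring]
      rw [Real.rpow_add_one hx0.ne']
    have eβ : x ^ β = x ^ (β - 1) * x := by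
      nth_rewrite 1 [show β = β - 1 + 1 by ring]
      rw [Real.rpow_add_one hx0.ne']
    have eP : x ^ (α + β - 1) = x ^ (α - 1) * x ^ (β - 1) * x := by
      rw [show α + β - 1 = (α - 1) + (β - 1) + 1 by ring, Real.rpow_add_one hx0.ne',
        Real.rpow_add hx0]
    rw [eP] at key2
    rw [eα, eβ]
    ring_nf
    ring_nf at key2
    linarith [key2]
end

section
/- Let $(\alpha,\beta)$ satisfy $\alpha-\beta+1>0$, $\alpha\le 2\beta$ and $\alpha(\beta+1)\le\beta^2$. For $0<a<b$ define $m:=(\alpha+2)\frac{b^{\beta+1}-a^{\beta+1}}{b^{\alpha+2}-a^{\alpha+2}}$. Then $a^{\alpha-\beta+1} m < \beta+1$ and $b^{\alpha-\beta+1} m > \beta+1$. -/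
open Real

lemma key_rpow_ineq (x p q : ℝ) (hx : 0 < x) (hx1 : x ≠ 1) (hp : 0 < p) (hpq : p < q) :
    q * (x ^ p - 1) < p * (x ^ q - 1) := by
  have hxp : (0:ℝ) < x ^ p := Real.rpow_pos_of_pos hx p
  have hz : (-1:ℝ) ≤ x ^ p - 1 := by linarith
  have hz' : x ^ p - 1 ≠ 0 := by
    intro h
    apply hx1
    have hxp1 : x ^ p = 1 := by linarith
    have := congrArg (fun y => y ^ p⁻¹) hxp1
    simpa [Real.rpow_rpow_inv hx.le hp.ne', Real.one_rpow] using this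
  have hqp : 1 < q / p := (one_lt_div hp).mpr hpq
  have hber := one_add_mul_self_lt_rpow_one_add hz hz' hqp
  have hrw : (1 + (x ^ p - 1)) ^ (q / p) = x ^ q := by
    rw [show 1 + (x ^ p - 1) = x ^ p by ring, ← Real.rpow_mul hx.le]
    congr 1
    field_simp
  rw [hrw] at hber
  have : p * (1 + q / p * (x ^ p - 1)) < p * x ^ q := by
    exact (mul_lt_mul_iff_right₀ hp).mpr hber
  have hq : p * (q / p) = q := by field_simp
  nlinarith

theorem properties_of_m (α β a b : ℝ)
    (h1 : α - β + 1 > 0) (h2 : α ≤ 2 * β) (h3 : α * (β + 1) ≤ β ^ 2)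
    (ha : 0 < a) (hab : a < b)
    (m : ℝ) (hm : m = (α + 2) * (b ^ (β + 1) - a ^ (β + 1)) / (b ^ (α + 2) - a ^ (α + 2))) :
    a ^ (α - β + 1) * m < β + 1 ∧ b ^ (α - β + 1) * m > β + 1 := by
  set p := β + 1 with hpdef
  set q := α + 2 with hqdef
  have hp : 0 < p := by simp only [hpdef]; linarith
  have hpq : p < q := by simp only [hpdef, hqdef]; linarith
  have hq : 0 < q := lt_trans hp hpq
  have hb : 0 < b := lt_trans ha hab
  have hD : 0 < b ^ q - a ^ q :=
    sub_pos.mpr (Real.rpow_lt_rpow ha.le hab hq)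
  have haq : (0:ℝ) < a ^ q := Real.rpow_pos_of_pos ha q
  have hbq : (0:ℝ) < b ^ q := Real.rpow_pos_of_pos hb q
  have hap : (0:ℝ) < a ^ p := Real.rpow_pos_of_pos ha p
  have hbp : (0:ℝ) < b ^ p := Real.rpow_pos_of_pos hb p
  have hqp : α - β + 1 = q - p := by simp only [hpdef, hqdef]; ring
  -- first inequality
  have key1 : q * ((b / a) ^ p - 1) < p * ((b / a) ^ q - 1) :=
    key_rpow_ineq _ p q (div_pos hb ha) (by
      intro h
      have : b = a := by field_simp at h; linarith
      linarith) hp hpq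
  have key2 : q * ((a / b) ^ p - 1) < p * ((a / b) ^ q - 1) :=
    key_rpow_ineq _ p q (div_pos ha hb) (by
      intro h
      have : a = b := by field_simp at h; linarith
      linarith) hp hpq
  have hdiv1p : (b / a) ^ p = b ^ p / a ^ p := Real.div_rpow hb.le ha.le p
  have hdiv1q : (b / a) ^ q = b ^ q / a ^ q := Real.div_rpow hb.le ha.le q
  have hdiv2p : (a / b) ^ p = a ^ p / b ^ p := Real.div_rpow ha.le hb.le p
  have hdiv2q : (a / b) ^ q = a ^ q / b ^ q := Real.div_rpow ha.le hb.le q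
  have hasub : a ^ (q - p) = a ^ q / a ^ p := Real.rpow_sub ha q p
  have hbsub : b ^ (q - p) = b ^ q / b ^ p := Real.rpow_sub hb q p
  rw [hdiv1p, hdiv1q] at key1
  rw [hdiv2p, hdiv2q] at key2
  subst hm
  rw [hqp, hasub, hbsub]
  constructor
  · rw [div_mul_div_comm, div_lt_iff₀ (by positivity)]
    have h1' : q * (b ^ p / a ^ p - 1) * (a ^ p * a ^ q) <
        p * (b ^ q / a ^ q - 1) * (a ^ p * a ^ q) :=
      mul_lt_mul_of_pos_right key1 (by positivity)
    have e1 : q * (b ^ p / a ^ p - 1) * (a ^ p * a ^ q)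
        = q * (b ^ p - a ^ p) * a ^ q := by field_simp
    have e2 : p * (b ^ q / a ^ q - 1) * (a ^ p * a ^ q)
        = p * (b ^ q - a ^ q) * a ^ p := by field_simp
    rw [e1, e2] at h1'
    nlinarith [h1']
  · rw [gt_iff_lt, div_mul_div_comm, lt_div_iff₀ (by positivity)]
    have h2' : q * (a ^ p / b ^ p - 1) * (b ^ p * b ^ q) <
        p * (a ^ q / b ^ q - 1) * (b ^ p * b ^ q) :=
      mul_lt_mul_of_pos_right key2 (by positivity)
    have e1 : q * (a ^ p / b ^ p - 1) * (b ^ p * b ^ q)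
        = q * (a ^ p - b ^ p) * b ^ q := by field_simp
    have e2 : p * (a ^ q / b ^ q - 1) * (b ^ p * b ^ q)
        = p * (a ^ q - b ^ q) * b ^ p := by field_simp
    rw [e1, e2] at h2'
    ring_nf at h2' ⊢
    linarith
end

section
/- Let $(\alpha,\beta)\in\mathcal{P}$ and fix $a>0$. Then the function $b\mapsto m(a,b):=(\alpha+2)\frac{b^{\beta+1}-a^{\beta+1}}{b^{\alpha+2}-a^{\alpha+2}}$ is strictly decreasing on $(a,\infty)$, and the function $b\mapsto b^{\alpha-\beta+1}m(a,b)$ is strictly increasing on $(a,\infty)$. -/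
open Real Set

lemma key_ineq (p q a b : ℝ) (hp : 0 < p) (hpq : p < q) (ha : 0 < a) (hb : a < b) :
    q * b ^ p * a ^ (q - p) < p * b ^ q + (q - p) * a ^ q := by
  have hb0 : 0 < b := ha.trans hb
  set F : ℝ → ℝ := fun x => p * x ^ q + (q - p) * a ^ q - q * a ^ (q - p) * x ^ p with hF
  have hFd : ∀ x : ℝ, 0 < x → HasDerivAt F
      (p * (q * x ^ (q - 1)) - q * a ^ (q - p) * (p * x ^ (p - 1))) x := by
    intro x hx0
    exact (((Real.hasDerivAt_rpow_const (Or.inl hx0.ne')).const_mul p).add_const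
      ((q - p) * a ^ q)).sub ((Real.hasDerivAt_rpow_const (Or.inl hx0.ne')).const_mul _)
  have hcont : ContinuousOn F (Set.Ici a) := fun x hx =>
    (hFd x (lt_of_lt_of_le ha hx)).continuousAt.continuousWithinAt
  have hmono : StrictMonoOn F (Set.Ici a) := by
    apply strictMonoOn_of_deriv_pos (convex_Ici a) hcont
    intro x hx
    rw [interior_Ici] at hx
    have hx0 : (0:ℝ) < x := ha.trans hx
    rw [(hFd x hx0).deriv]
    have h1 : a ^ (q - p) < x ^ (q - p) :=
      Real.rpow_lt_rpow ha.le hx (by linarith)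
    have h2 : x ^ (q - p) * x ^ (p - 1) = x ^ (q - 1) := by
      rw [← Real.rpow_add hx0]; ring_nf
    have h3 : (0:ℝ) < x ^ (p - 1) := Real.rpow_pos_of_pos hx0 _
    have hq : (0:ℝ) < q := hp.trans hpq
    nlinarith [mul_lt_mul_of_pos_left (mul_lt_mul_of_pos_right h1 h3) (mul_pos hp hq), h2,
      mul_pos hp hq]
  have hFa : F a = 0 := by
    have : a ^ (q - p) * a ^ p = a ^ q := by
      rw [← Real.rpow_add ha]; ring_nf
    simp only [hF]; nlinarith [this]
  have := hmono (Set.self_mem_Ici) (Set.mem_Ici.2 hb.le) hb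
  rw [hFa] at this
  simp only [hF] at this
  linarith

lemma key_ineq' (p q a b : ℝ) (hp : 0 < p) (hpq : p < q) (ha : 0 < a) (hb : a < b) :
    q * b ^ (q - p) * a ^ p < (q - p) * b ^ q + p * a ^ q := by
  have := key_ineq (q - p) q a b (by linarith) (by linarith) ha hb
  have e : q - (q - p) = p := by ring
  rw [e] at this
  linarith

lemma aux_anti (p q a : ℝ) (hp : 0 < p) (hpq : p < q) (ha : 0 < a) :
    StrictAntiOn (fun b : ℝ => q * (b ^ p - a ^ p) / (b ^ q - a ^ q)) (Set.Ioi a) := by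
  have hq : (0:ℝ) < q := hp.trans hpq
  have hD : ∀ b ∈ Set.Ioi a, (0:ℝ) < b ^ q - a ^ q := fun b hb =>
    sub_pos.2 (Real.rpow_lt_rpow ha.le hb hq)
  have hder : ∀ b ∈ Set.Ioi a, HasDerivAt (fun x : ℝ => q * (x ^ p - a ^ p) / (x ^ q - a ^ q))
      ((q * (p * b ^ (p - 1)) * (b ^ q - a ^ q) -
        q * (b ^ p - a ^ p) * (q * b ^ (q - 1))) / (b ^ q - a ^ q) ^ 2) b := by
    intro b hb
    have hb0 : (0:ℝ) < b := ha.trans hb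
    exact (((Real.hasDerivAt_rpow_const (Or.inl hb0.ne')).sub_const _).const_mul q).div
      ((Real.hasDerivAt_rpow_const (Or.inl hb0.ne')).sub_const _) (hD b hb).ne'
  apply strictAntiOn_of_deriv_neg (convex_Ioi a)
    (fun b hb => (hder b hb).continuousAt.continuousWithinAt)
  intro b hb
  rw [interior_Ioi] at hb
  rw [(hder b hb).deriv]
  apply div_neg_of_neg_of_pos _ (pow_pos (hD b hb) 2)
  have hb0 : (0:ℝ) < b := ha.trans hb
  have hk := key_ineq' p q a b hp hpq ha hb
  have h3 : (0:ℝ) < b ^ (p - 1) := Real.rpow_pos_of_pos hb0 _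
  have m1 : b ^ (q - p) * b ^ (p - 1) = b ^ (q - 1) := by
    rw [← Real.rpow_add hb0]; ring_nf
  have m2 : b ^ q * b ^ (p - 1) = b ^ (q - 1) * b ^ p := by
    rw [← Real.rpow_add hb0, ← Real.rpow_add hb0]; ring_nf
  have e3 : q * (b ^ p - a ^ p) * (q * b ^ (q - 1)) - q * (p * b ^ (p - 1)) * (b ^ q - a ^ q)
      = q * b ^ (p - 1) * ((q - p) * b ^ q + p * a ^ q - q * b ^ (q - p) * a ^ p) := by
    linear_combination (q ^ 2 * a ^ p) * m1 - q ^ 2 * m2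
  nlinarith [mul_pos (mul_pos hq h3) (sub_pos.2 hk)]

lemma aux_mono (p q r a : ℝ) (hp : 0 < p) (hpq : p < q) (hr : r = q - p) (ha : 0 < a) :
    StrictMonoOn (fun b : ℝ => b ^ r * (q * (b ^ p - a ^ p) / (b ^ q - a ^ q)))
      (Set.Ioi a) := by
  subst hr
  have hq : (0:ℝ) < q := hp.trans hpq
  have hD : ∀ b ∈ Set.Ioi a, (0:ℝ) < b ^ q - a ^ q := fun b hb =>
    sub_pos.2 (Real.rpow_lt_rpow ha.le hb hq)
  -- equality with nicer form
  have heq : ∀ b ∈ Set.Ioi a, b ^ (q - p) * (q * (b ^ p - a ^ p) / (b ^ q - a ^ q))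
      = q * (b ^ q - a ^ p * b ^ (q - p)) / (b ^ q - a ^ q) := by
    intro b hb
    have hb0 : (0:ℝ) < b := ha.trans hb
    have hbq : b ^ (q - p) * b ^ p = b ^ q := by
      rw [← Real.rpow_add hb0]; ring_nf
    rw [← mul_div_assoc]
    congr 1
    linear_combination q * hbq
  have hder : ∀ b ∈ Set.Ioi a,
      HasDerivAt (fun x : ℝ => q * (x ^ q - a ^ p * x ^ (q - p)) / (x ^ q - a ^ q))
      ((q * (q * b ^ (q - 1) - a ^ p * ((q - p) * b ^ (q - p - 1))) * (b ^ q - a ^ q) -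
        q * (b ^ q - a ^ p * b ^ (q - p)) * (q * b ^ (q - 1))) / (b ^ q - a ^ q) ^ 2) b := by
    intro b hb
    have hb0 : (0:ℝ) < b := ha.trans hb
    exact (((Real.hasDerivAt_rpow_const (Or.inl hb0.ne')).sub
      ((Real.hasDerivAt_rpow_const (Or.inl hb0.ne')).const_mul (a ^ p))).const_mul q).div
      ((Real.hasDerivAt_rpow_const (Or.inl hb0.ne')).sub_const _) (hD b hb).ne'
  have hH : StrictMonoOn (fun b : ℝ => q * (b ^ q - a ^ p * b ^ (q - p)) / (b ^ q - a ^ q))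
      (Set.Ioi a) := by
    apply strictMonoOn_of_deriv_pos (convex_Ioi a)
      (fun b hb => (hder b hb).continuousAt.continuousWithinAt)
    intro b hb
    rw [interior_Ioi] at hb
    rw [(hder b hb).deriv]
    apply div_pos _ (pow_pos (hD b hb) 2)
    have hb0 : (0:ℝ) < b := ha.trans hb
    have hk := key_ineq p q a b hp hpq ha hb
    have n1 : a ^ (q - p) * a ^ p = a ^ q := by
      rw [← Real.rpow_add ha]; ring_nf
    have n2 : b ^ p * b ^ (q - p - 1) = b ^ (q - 1) := by
      rw [← Real.rpow_add hb0]; ring_nf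
    have n3 : b ^ (q - p) * b ^ (q - 1) = b ^ (q - p - 1) * b ^ q := by
      rw [← Real.rpow_add hb0, ← Real.rpow_add hb0]; ring_nf
    have hpos1 : (0:ℝ) < a ^ p := Real.rpow_pos_of_pos ha _
    have hpos2 : (0:ℝ) < b ^ (q - p - 1) := Real.rpow_pos_of_pos hb0 _
    have e4 : q * (q * b ^ (q - 1) - a ^ p * ((q - p) * b ^ (q - p - 1))) * (b ^ q - a ^ q) -
        q * (b ^ q - a ^ p * b ^ (q - p)) * (q * b ^ (q - 1))
        = q * (a ^ p * b ^ (q - p - 1) *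
            (p * b ^ q + (q - p) * a ^ q - q * b ^ p * a ^ (q - p))) := by
      linear_combination (q ^ 2 * b ^ p * b ^ (q - p - 1)) * n1 + (q ^ 2 * a ^ q) * n2 +
        (q ^ 2 * a ^ p) * n3
    rw [e4]
    exact mul_pos hq (mul_pos (mul_pos hpos1 hpos2) (by linarith))
  intro x hx y hy hxy
  simp only
  rw [heq x hx, heq y hy]
  exact hH hx hy hxy

theorem monotonicity_of_m (α β a : ℝ)
    (h1 : α - β + 1 > 0) (h2 : α ≤ 2 * β) (h3 : α * (β + 1) ≤ β ^ 2)
    (ha : 0 < a) :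
    StrictAntiOn (fun b : ℝ =>
        (α + 2) * (b ^ (β + 1) - a ^ (β + 1)) / (b ^ (α + 2) - a ^ (α + 2)))
      (Set.Ioi a) ∧
    StrictMonoOn (fun b : ℝ =>
        b ^ (α - β + 1) *
          ((α + 2) * (b ^ (β + 1) - a ^ (β + 1)) / (b ^ (α + 2) - a ^ (α + 2))))
      (Set.Ioi a) := by
  have hp : (0:ℝ) < β + 1 := by linarith
  have hpq : β + 1 < α + 2 := by linarith
  exact ⟨aux_anti (β + 1) (α + 2) a hp hpq ha,
    aux_mono (β + 1) (α + 2) (α - β + 1) a hp hpq (by ring) ha⟩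
end

section
/- Let $(\alpha,\beta)\in\mathcal{P}$ and $0<a<b$. Define $m=(\alpha+2)\frac{b^{\beta+1}-a^{\beta+1}}{b^{\alpha+2}-a^{\alpha+2}}$. Then $\frac{1}{1+\beta-m a^{\alpha-\beta+1}}-\frac{1}{1+\beta-m b^{\alpha-\beta+1}}\geq 2\,\frac{a+b}{b-a}$, with equality if and only if $(\alpha,\beta)=(0,0)$. -/
open Real Set

/-- Key analytic lemma: for `u > 1` and `t ∈ (0,1)`,
`(1 - t^u) * (1 + t) < u * (1 - t) * (1 + t^u)` (i.e. `tanh(u y) < u tanh y`). -/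
lemma tanh_rpow_lemma (u t : ℝ) (hu : 1 < u) (ht0 : 0 < t) (ht1 : t < 1) :
    (1 - t ^ u) * (1 + t) < u * (1 - t) * (1 + t ^ u) := by
  set y : ℝ := -Real.log t / 2 with hy_def
  have hlog : Real.log t < 0 := Real.log_neg ht0 ht1
  have hy : 0 < y := by rw [hy_def]; linarith
  set G : ℝ → ℝ := fun s =>
    (u - 1) * (Real.exp ((u + 1) * s) - Real.exp ((-(u + 1)) * s)) -
      (u + 1) * (Real.exp ((u - 1) * s) - Real.exp ((-(u - 1)) * s)) with hG_def
  have dexp : ∀ (k s : ℝ), HasDerivAt (fun x => Real.exp (k * x)) (k * Real.exp (k * s)) s := by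
    intro k s
    have h := ((hasDerivAt_id s).const_mul k).exp
    simpa [mul_comm] using h
  have hG' : ∀ s : ℝ, HasDerivAt G
      ((u - 1) * ((u + 1) * Real.exp ((u + 1) * s) - (-(u + 1)) * Real.exp ((-(u + 1)) * s)) -
        (u + 1) * ((u - 1) * Real.exp ((u - 1) * s) - (-(u - 1)) * Real.exp ((-(u - 1)) * s))) s := by
    intro s
    exact (((dexp (u+1) s).sub (dexp (-(u+1)) s)).const_mul (u-1)).sub
      (((dexp (u-1) s).sub (dexp (-(u-1)) s)).const_mul (u+1))
  have hmono : StrictMonoOn G (Set.Ici (0:ℝ)) := by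
    apply strictMonoOn_of_deriv_pos (convex_Ici 0)
    · apply Continuous.continuousOn
      fun_prop
    · intro s hs
      rw [interior_Ici, mem_Ioi] at hs
      rw [(hG' s).deriv]
      have hE1 : Real.exp ((u + 1) * s) = Real.exp ((u - 1) * s) * Real.exp (2 * s) := by
        rw [← Real.exp_add]; congr 1; ring
      have hE4 : Real.exp ((-(u - 1)) * s) = Real.exp ((-(u + 1)) * s) * Real.exp (2 * s) := by
        rw [← Real.exp_add]; congr 1; ring
      have h23 : Real.exp ((-(u + 1)) * s) < Real.exp ((u - 1) * s) :=
        Real.exp_lt_exp.2 (by nlinarith)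
      have hgt : 1 < Real.exp (2 * s) := by
        calc (1:ℝ) = Real.exp 0 := (Real.exp_zero).symm
        _ < Real.exp (2 * s) := Real.exp_lt_exp.2 (by linarith)
      have huu : 0 < u * u - 1 := by nlinarith
      have key : 0 < (Real.exp (2 * s) - 1) *
          (Real.exp ((u - 1) * s) - Real.exp ((-(u + 1)) * s)) :=
        mul_pos (by linarith) (by linarith)
      rw [hE1, hE4]
      nlinarith [mul_pos huu key]
  have hG0 : G 0 = 0 := by simp [hG_def]
  have hGy : 0 < G y := by
    have := hmono (Set.self_mem_Ici) (Set.mem_Ici.2 hy.le) hy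
    rwa [hG0] at this
  -- translate to rpow
  set R : ℝ := Real.exp (-(u * y)) with hR_def
  set Z : ℝ := Real.exp (-y) with hZ_def
  set R' : ℝ := Real.exp (u * y) with hR'_def
  set Z' : ℝ := Real.exp y with hZ'_def
  have hR0 : 0 < R := Real.exp_pos _
  have hZ0 : 0 < Z := Real.exp_pos _
  have hRR' : R * R' = 1 := by rw [hR_def, hR'_def, ← Real.exp_add]; simp
  have hZZ' : Z * Z' = 1 := by rw [hZ_def, hZ'_def, ← Real.exp_add]; simp
  have hZt : Z * Z = t := by
    rw [hZ_def, ← Real.exp_add, show -y + -y = Real.log t by rw [hy_def]; ring, Real.exp_log ht0]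
  have hRt : R * R = t ^ u := by
    rw [hR_def, ← Real.exp_add, show -(u * y) + -(u * y) = Real.log t * u by rw [hy_def]; ring,
      ← Real.rpow_def_of_pos ht0]
  have e1 : Real.exp ((u + 1) * y) = R' * Z' := by
    rw [show (u + 1) * y = u * y + y by ring, Real.exp_add, hR'_def, hZ'_def]
  have e2 : Real.exp ((-(u + 1)) * y) = R * Z := by
    rw [show (-(u + 1)) * y = -(u * y) + -y by ring, Real.exp_add]
  have e3 : Real.exp ((u - 1) * y) = R' * Z := by
    rw [show (u - 1) * y = u * y + -y by ring, Real.exp_add, hR'_def]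
  have e4 : Real.exp ((-(u - 1)) * y) = R * Z' := by
    rw [show (-(u - 1)) * y = -(u * y) + y by ring, Real.exp_add, hZ'_def]
  rw [hG_def] at hGy
  simp only [e1, e2, e3, e4] at hGy
  have h2 := mul_pos hGy (mul_pos hR0 hZ0)
  have hkey : ((u - 1) * (R' * Z' - R * Z) - (u + 1) * (R' * Z - R * Z')) * (R * Z)
      = (u - 1) * (1 - (R * R) * (Z * Z)) - (u + 1) * ((Z * Z) - (R * R)) := by
    linear_combination ((u - 1) * (Z * Z') - (u + 1) * (Z * Z)) * hRR' +
      ((u - 1) + (u + 1) * (R * R)) * hZZ'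
  rw [hkey, hRt, hZt] at h2
  nlinarith [h2]


/-- weighted AM-GM (strict): `(w+v) * t^w < w * (t^w * t^v) + v` for `t ∈ (0,1)`. -/
lemma convex_pos_lemma (w v t : ℝ) (hw : 0 < w) (hv : 0 < v) (ht0 : 0 < t) (ht1 : t < 1) :
    (w + v) * t ^ w < w * (t ^ w * t ^ v) + v := by
  have hwv : 0 < w + v := by linarith
  have hlog : Real.log t < 0 := Real.log_neg ht0 ht1
  have hne : (w + v) * Real.log t ≠ (0:ℝ) := by
    have : (w + v) * Real.log t < 0 := mul_neg_of_pos_of_neg hwv hlog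
    linarith
  have h := strictConvexOn_exp.2 (Set.mem_univ ((w + v) * Real.log t)) (Set.mem_univ (0:ℝ))
    hne (by positivity : (0:ℝ) < w / (w + v)) (by positivity : (0:ℝ) < v / (w + v))
    (by field_simp)
  simp only [smul_eq_mul, mul_zero, add_zero, Real.exp_zero, mul_one] at h
  have harg : w / (w + v) * ((w + v) * Real.log t) = Real.log t * w := by
    field_simp
  rw [harg, ← Real.rpow_def_of_pos ht0] at h
  have hexp : Real.exp ((w + v) * Real.log t) = t ^ w * t ^ v := by
    rw [show (w + v) * Real.log t = Real.log t * (w + v) by ring,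
      ← Real.rpow_def_of_pos ht0, Real.rpow_add ht0]
  rw [hexp] at h
  have h2 := (mul_lt_mul_iff_right₀ hwv).2 h
  have e2 : (w + v) * (w / (w + v) * (t ^ w * t ^ v) + v / (w + v))
      = w * (t ^ w * t ^ v) + v := by field_simp
  rw [e2] at h2
  linarith

/-- Strict positivity of the bracket `B̂`. -/
lemma bhat_strict (q c t : ℝ) (hq : 0 < q) (hc : 0 < c) (hqc : q * c ≤ 1)
    (ht0 : 0 < t) (ht1 : t < 1) (hne : ¬(q = 1 ∧ c = 1)) :
    0 < (q + c) * (1 - t) * (1 + t ^ ((q + c) / 2))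
      - 2 * q * c * (1 - t ^ ((q + c) / 2)) * (1 + t) := by
  set w : ℝ := t ^ ((q + c) / 2) with hw_def
  have hw0 : 0 < w := Real.rpow_pos_of_pos ht0 _
  have hw1 : w < 1 := Real.rpow_lt_one ht0.le ht1 (by positivity)
  rcases le_or_gt (q + c) 2 with hp | hp
  · have hqc1 : q * c < 1 := by
      rcases lt_or_eq_of_le hqc with h | h
      · exact h
      · exfalso
        apply hne
        have hqc' : (q - c) ^ 2 ≤ 0 := by nlinarith
        have hqec : q = c := by nlinarith [sq_nonneg (q - c)]
        constructor <;> nlinarith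
    have htw : t ≤ w := by
      rw [hw_def]
      calc t = t ^ (1:ℝ) := (Real.rpow_one t).symm
      _ ≤ t ^ ((q + c) / 2) := Real.rpow_le_rpow_of_exponent_ge ht0 ht1.le (by linarith)
    have h2qc : 2 * q * c < q + c := by nlinarith [sq_nonneg (q - c), mul_pos hq hc]
    have e1 : 0 < (q + c - 2 * q * c) * ((1 - w) * (1 + t)) := by
      apply mul_pos (by linarith)
      apply mul_pos (by linarith) (by linarith)
    have e2 : 0 ≤ 2 * (q + c) * (w - t) := by
      apply mul_nonneg (by positivity) (by linarith)
    nlinarith [e1, e2]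
  · have hu : 1 < (q + c) / 2 := by linarith
    have htanh := tanh_rpow_lemma ((q + c) / 2) t hu ht0 ht1
    rw [← hw_def] at htanh
    have h1 : 2 * q * c * ((1 - w) * (1 + t)) ≤ 2 * ((1 - w) * (1 + t)) := by
      apply mul_le_mul_of_nonneg_right _ (by nlinarith)
      linarith
    nlinarith [htanh, h1]
/-- Core strict inequality `KK > 0` when `(q,c) ≠ (1,1)`. -/
lemma core_strict (q c t : ℝ) (hq : 0 < q) (hc : 0 < c) (hqc : q * c ≤ 1)
    (ht0 : 0 < t) (ht1 : t < 1) (hne : ¬(q = 1 ∧ c = 1)) :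
    0 < (q + c) * (1 - t ^ q) * (1 - t ^ c) * (1 - t) * (1 - t ^ q * t ^ c)
      - 2 * (1 + t) * ((q - (q + c) * t ^ c + c * (t ^ q * t ^ c)) *
        (c - (q + c) * t ^ q + q * (t ^ q * t ^ c))) := by
  set X : ℝ := t ^ (q / 4) with hX_def
  set Y : ℝ := t ^ (c / 4) with hY_def
  have hX0 : 0 < X := Real.rpow_pos_of_pos ht0 _
  have hY0 : 0 < Y := Real.rpow_pos_of_pos ht0 _
  have hX1 : X < 1 := Real.rpow_lt_one ht0.le ht1 (by positivity)
  have hY1 : Y < 1 := Real.rpow_lt_one ht0.le ht1 (by positivity)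
  have hX4 : X ^ 4 = t ^ q := by
    rw [hX_def, ← Real.rpow_natCast (t ^ (q / 4)) 4, ← Real.rpow_mul ht0.le]
    norm_num
  have hY4 : Y ^ 4 = t ^ c := by
    rw [hY_def, ← Real.rpow_natCast (t ^ (c / 4)) 4, ← Real.rpow_mul ht0.le]
    norm_num
  have hXY : X ^ 2 * Y ^ 2 = t ^ ((q + c) / 2) := by
    rw [hX_def, hY_def, ← Real.rpow_natCast (t ^ (q / 4)) 2,
      ← Real.rpow_natCast (t ^ (c / 4)) 2, ← Real.rpow_mul ht0.le, ← Real.rpow_mul ht0.le,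
      ← Real.rpow_add ht0]
    congr 1
    ring
  have hBhat : 0 < (q + c) * (1 - t) * (1 + X ^ 2 * Y ^ 2)
      - 2 * q * c * (1 - X ^ 2 * Y ^ 2) * (1 + t) := by
    rw [hXY]
    exact bhat_strict q c t hq hc hqc ht0 ht1 hne
  rw [← hX4, ← hY4]
  have hid : (q + c) * (1 - X ^ 4) * (1 - Y ^ 4) * (1 - t) * (1 - X ^ 4 * Y ^ 4)
      - 2 * (1 + t) * ((q - (q + c) * Y ^ 4 + c * (X ^ 4 * Y ^ 4)) *
        (c - (q + c) * X ^ 4 + q * (X ^ 4 * Y ^ 4)))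
      = 2 * (1 + t) * (q * X ^ 2 * (1 - Y ^ 4) - c * Y ^ 2 * (1 - X ^ 4)) ^ 2
        + (1 - X ^ 4) * (1 - Y ^ 4) * (1 - X ^ 2 * Y ^ 2) *
          ((q + c) * (1 - t) * (1 + X ^ 2 * Y ^ 2)
            - 2 * q * c * (1 - X ^ 2 * Y ^ 2) * (1 + t)) := by
    ring
  rw [hid]
  have hx4 : X ^ 4 < 1 := pow_lt_one₀ hX0.le hX1 (by norm_num)
  have hy4 : Y ^ 4 < 1 := pow_lt_one₀ hY0.le hY1 (by norm_num)
  have hx2 : X ^ 2 < 1 := pow_lt_one₀ hX0.le hX1 (by norm_num)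
  have hy2 : Y ^ 2 < 1 := pow_lt_one₀ hY0.le hY1 (by norm_num)
  have hf1 : 0 < 1 - X ^ 4 := by linarith
  have hf2 : 0 < 1 - Y ^ 4 := by linarith
  have hf3 : 0 < 1 - X ^ 2 * Y ^ 2 := by nlinarith [pow_pos hX0 2, pow_pos hY0 2]
  have hsq : 0 ≤ 2 * (1 + t) * (q * X ^ 2 * (1 - Y ^ 4) - c * Y ^ 2 * (1 - X ^ 4)) ^ 2 := by
    positivity
  have : 0 < (1 - X ^ 4) * (1 - Y ^ 4) * (1 - X ^ 2 * Y ^ 2) *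
      ((q + c) * (1 - t) * (1 + X ^ 2 * Y ^ 2)
        - 2 * q * c * (1 - X ^ 2 * Y ^ 2) * (1 + t)) := by
    exact mul_pos (mul_pos (mul_pos hf1 hf2) hf3) hBhat
  linarith
set_option maxHeartbeats 1000000 in
theorem main_algebraic_inequality (α β a b : ℝ)
    (h1 : α - β + 1 > 0) (h2 : α ≤ 2 * β) (h3 : α * (β + 1) ≤ β ^ 2)
    (ha : 0 < a) (hab : a < b)
    (m : ℝ) (hm : m = (α + 2) * (b ^ (β + 1) - a ^ (β + 1)) / (b ^ (α + 2) - a ^ (α + 2))) :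
    1 / (1 + β - m * a ^ (α - β + 1)) - 1 / (1 + β - m * b ^ (α - β + 1))
        ≥ 2 * (a + b) / (b - a) ∧
    (1 / (1 + β - m * a ^ (α - β + 1)) - 1 / (1 + β - m * b ^ (α - β + 1))
        = 2 * (a + b) / (b - a) ↔ (α, β) = ((0 : ℝ), (0 : ℝ))) := by
  have hb : 0 < b := ha.trans hab
  have hba0 : 0 < b - a := sub_pos.2 hab
  by_cases hcase : α = 0 ∧ β = 0
  · obtain ⟨hα, hβ⟩ := hcase
    subst hα hβ
    have e1 : ∀ x : ℝ, 0 < x → x ^ ((0:ℝ) + 2) = x * x := by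
      intro x hx
      rw [show ((0:ℝ) + 2) = ((2:ℕ):ℝ) by norm_num, Real.rpow_natCast]
      ring
    have e2 : ∀ x : ℝ, x ^ ((0:ℝ) + 1) = x := by
      intro x; rw [show ((0:ℝ) + 1) = (1:ℝ) by norm_num, Real.rpow_one]
    have e3 : ∀ x : ℝ, x ^ ((0:ℝ) - 0 + 1) = x := by
      intro x; rw [show ((0:ℝ) - 0 + 1) = (1:ℝ) by norm_num, Real.rpow_one]
    rw [e1 a ha, e1 b hb, e2 a, e2 b] at hm
    have habp : 0 < a + b := by linarith
    have hm2 : m = 2 / (a + b) := by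
      rw [hm, show b * b - a * a = (b - a) * (b + a) by ring,
        div_eq_div_iff (by positivity) (by positivity : (a:ℝ) + b ≠ 0)]
      ring
    have hA : 1 + (0:ℝ) - m * a = (b - a) / (a + b) := by
      rw [hm2]; field_simp; ring
    have hB : 1 + (0:ℝ) - m * b = -((b - a) / (a + b)) := by
      rw [hm2]; field_simp; ring
    rw [e3 a, e3 b, hA, hB]
    have hEq : 1 / ((b - a) / (a + b)) - 1 / (-((b - a) / (a + b))) = 2 * (a + b) / (b - a) := by
      rw [one_div_div, div_neg, one_div_div]
      field_simp
      ring
    exact ⟨hEq.ge, ⟨fun _ => rfl, fun _ => hEq⟩⟩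
  · have hc0' : 0 < α - β + 1 := h1
    have hcq' : α - β + 1 ≤ β + 1 := by linarith only [h2]
    have hq0' : 0 < β + 1 := lt_of_lt_of_le hc0' hcq'
    have hqc1' : (β + 1) * (α - β + 1) ≤ 1 := by nlinarith only [h3]
    set qq := β + 1 with hqq_def
    set cc := α - β + 1 with hcc_def
    set pp := α + 2 with hpp_def
    have hc0 : 0 < cc := hc0'
    have hq0 : 0 < qq := hq0'
    have hqc1 : qq * cc ≤ 1 := hqc1'
    have hppsum : pp = qq + cc := by rw [hpp_def, hqq_def, hcc_def]; ring
    have hppos : 0 < pp := by rw [hppsum]; linarith only [hq0, hc0]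
    set t := a / b with ht_def
    have ht0 : 0 < t := div_pos ha hb
    have ht1 : t < 1 := (div_lt_one hb).2 hab
    have hat : a = b * t := by rw [ht_def]; field_simp
    have hpow : ∀ r : ℝ, a ^ r = b ^ r * t ^ r := fun r => by
      rw [hat, Real.mul_rpow hb.le ht0.le]
    have hbppos : 0 < b ^ pp := Real.rpow_pos_of_pos hb pp
    have hD : 0 < b ^ pp - a ^ pp := sub_pos.2 (Real.rpow_lt_rpow ha.le hab hppos)
    have hmD : m * (b ^ pp - a ^ pp) = pp * (b ^ qq - a ^ qq) := by
      rw [hm]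
      field_simp
    have hbsplit : b ^ pp = b ^ qq * b ^ cc := by rw [hppsum, Real.rpow_add hb]
    have htsplit : t ^ pp = t ^ qq * t ^ cc := by rw [hppsum, Real.rpow_add ht0]
    have h1β : 1 + β = qq := by rw [hqq_def]; ring
    set Φ := qq - (qq + cc) * t ^ cc + cc * (t ^ qq * t ^ cc) with hPhi_def
    set Ψ := cc - (qq + cc) * t ^ qq + qq * (t ^ qq * t ^ cc) with hPsi_def
    set A := 1 + β - m * a ^ cc with hA_def
    set B := 1 + β - m * b ^ cc with hB_def
    have hAD : A * (b ^ pp - a ^ pp) = b ^ pp * Φ := by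
      have step1 : A * (b ^ pp - a ^ pp)
          = (1 + β) * (b ^ pp - a ^ pp) - a ^ cc * (m * (b ^ pp - a ^ pp)) := by
        rw [hA_def]; ring
      rw [step1, hmD, h1β, hpow pp, hpow qq, hpow cc, hbsplit, htsplit, hppsum, hPhi_def]
      ring
    have hBD : B * (b ^ pp - a ^ pp) = -(b ^ pp * Ψ) := by
      have step1 : B * (b ^ pp - a ^ pp)
          = (1 + β) * (b ^ pp - a ^ pp) - b ^ cc * (m * (b ^ pp - a ^ pp)) := by
        rw [hB_def]; ring
      rw [step1, hmD, h1β, hpow pp, hpow qq, hbsplit, htsplit, hppsum, hPsi_def]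
      ring
    have hPhi : 0 < Φ := by
      have h := convex_pos_lemma cc qq t hc0 hq0 ht0 ht1
      rw [hPhi_def]; linarith only [h]
    have hPsi : 0 < Ψ := by
      have h := convex_pos_lemma qq cc t hq0 hc0 ht0 ht1
      rw [hPsi_def]; linarith only [h]
    have hApos : 0 < A := by
      have h : 0 < A * (b ^ pp - a ^ pp) := by
        rw [hAD]; exact mul_pos hbppos hPhi
      by_contra hA'
      push_neg at hA'
      have h2 : 0 ≤ (-A) * (b ^ pp - a ^ pp) := mul_nonneg (neg_nonneg.2 hA') hD.le
      linarith only [h, h2]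
    have hBneg : B < 0 := by
      have h : B * (b ^ pp - a ^ pp) < 0 := by
        rw [hBD]
        have h3' : 0 < b ^ pp * Ψ := mul_pos hbppos hPsi
        linarith only [h3']
      by_contra hB'
      push_neg at hB'
      have h2 : 0 ≤ B * (b ^ pp - a ^ pp) := mul_nonneg hB' hD.le
      linarith only [h, h2]
    have hne_core : ¬(qq = 1 ∧ cc = 1) := by
      rintro ⟨hq1, hc1⟩
      apply hcase
      rw [hqq_def] at hq1
      rw [hcc_def] at hc1
      constructor <;> linarith only [hq1, hc1]
    have hKK := core_strict qq cc t hq0 hc0 hqc1 ht0 ht1 hne_core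
    set Num := (A - B) * (b - a) - 2 * (a + b) * (A * (-B)) with hNum_def
    have hba' : b - a = b * (1 - t) := by
      rw [ht_def]; field_simp
    have hab2 : a + b = b * (1 + t) := by
      rw [ht_def]; field_simp; ring
    have hNumD : Num * (b ^ pp - a ^ pp) ^ 2
        = b ^ pp * b ^ pp * b *
          ((qq + cc) * (1 - t ^ qq) * (1 - t ^ cc) * (1 - t) * (1 - t ^ qq * t ^ cc)
            - 2 * (1 + t) * ((qq - (qq + cc) * t ^ cc + cc * (t ^ qq * t ^ cc)) *
              (cc - (qq + cc) * t ^ qq + qq * (t ^ qq * t ^ cc)))) := by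
      have expand : Num * (b ^ pp - a ^ pp) ^ 2
          = ((A * (b ^ pp - a ^ pp)) - (B * (b ^ pp - a ^ pp))) * ((b - a) * (b ^ pp - a ^ pp))
            - 2 * (a + b) * ((A * (b ^ pp - a ^ pp)) * (-(B * (b ^ pp - a ^ pp)))) := by
        rw [hNum_def]; ring
      rw [expand, hAD, hBD, hba', hab2, hpow pp, hbsplit, htsplit, hPhi_def, hPsi_def]
      ring
    have hNumPos : 0 < Num := by
      have hgt : 0 < Num * (b ^ pp - a ^ pp) ^ 2 := by
        rw [hNumD]
        exact mul_pos (mul_pos (mul_pos hbppos hbppos) hb) hKK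
      by_contra hN
      push_neg at hN
      have h2 : 0 ≤ (-Num) * (b ^ pp - a ^ pp) ^ 2 :=
        mul_nonneg (neg_nonneg.2 hN) (sq_nonneg _)
      linarith only [hgt, h2]
    have hden : 0 < A * (-B) * (b - a) :=
      mul_pos (mul_pos hApos (neg_pos.2 hBneg)) hba0
    have hxA : A⁻¹ * A = 1 := inv_mul_cancel₀ hApos.ne'
    have hxB : B⁻¹ * B = 1 := inv_mul_cancel₀ hBneg.ne
    have hxba : (b - a)⁻¹ * (b - a) = 1 := inv_mul_cancel₀ hba0.ne'
    have hWden : (1 / A - 1 / B - 2 * (a + b) / (b - a)) * (A * (-B) * (b - a)) = Num := by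
      rw [hNum_def]
      linear_combination ((-B) * (b - a)) * hxA + (A * (b - a)) * hxB +
        (-(2 * (a + b) * A * (-B))) * hxba
    have hW : 0 < 1 / A - 1 / B - 2 * (a + b) / (b - a) := by
      have h3' : 0 < (1 / A - 1 / B - 2 * (a + b) / (b - a)) * (A * (-B) * (b - a)) := by
        rw [hWden]; exact hNumPos
      by_contra hW'
      push_neg at hW'
      have h4 : 0 ≤ (-(1 / A - 1 / B - 2 * (a + b) / (b - a))) * (A * (-B) * (b - a)) :=
        mul_nonneg (neg_nonneg.2 hW') hden.le
      linarith only [h3', h4]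
    have hstrict : 2 * (a + b) / (b - a) < 1 / A - 1 / B := by
      linarith only [hW]
    refine ⟨hstrict.le, ⟨fun heq => absurd heq (ne_of_gt hstrict), fun hpair => ?_⟩⟩
    exfalso
    apply hcase
    rw [Prod.mk.injEq] at hpair
    exact hpair
end

section
/- For all $t>0$, $\cosh t \leq \left(\frac{\sinh t}{t}\right)^3$. -/
private lemma coshdev (x : ℝ) :
    HasDerivAt (fun x => Real.sinh x * Real.cosh x ^ (-(1/3) : ℝ) - x)
      (Real.cosh x * Real.cosh x ^ (-(1/3) : ℝ) +
        Real.sinh x * (Real.sinh x * -(1/3) * Real.cosh x ^ (-(1/3) - 1 : ℝ)) - 1) x := by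
  have h2 : HasDerivAt (fun x => Real.cosh x ^ (-(1/3) : ℝ))
      (Real.sinh x * -(1/3) * Real.cosh x ^ (-(1/3) - 1 : ℝ)) x :=
    (Real.hasDerivAt_cosh x).rpow_const (Or.inl (Real.cosh_pos x).ne')
  exact ((Real.hasDerivAt_sinh x).mul h2).sub (hasDerivAt_id x)

private lemma dev_ge (x : ℝ) :
    0 ≤ Real.cosh x * Real.cosh x ^ (-(1/3) : ℝ) +
        Real.sinh x * (Real.sinh x * -(1/3) * Real.cosh x ^ (-(1/3) - 1 : ℝ)) - 1 := by
  set c := Real.cosh x with hc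
  have hcpos : 0 < c := Real.cosh_pos x
  set a := c ^ ((1:ℝ)/3) with hadef
  have ha : 0 < a := Real.rpow_pos_of_pos hcpos _
  have ha3 : a ^ 3 = c := by
    rw [hadef, ← Real.rpow_natCast (c ^ ((1:ℝ)/3)) 3, ← Real.rpow_mul hcpos.le]
    norm_num
  have hac : a ^ 2 = c ^ ((2:ℝ)/3) := by
    rw [hadef, ← Real.rpow_natCast (c ^ ((1:ℝ)/3)) 2, ← Real.rpow_mul hcpos.le]
    norm_num
  have h2 : c * c ^ (-(1/3) : ℝ) = a ^ 2 := by
    rw [hac, show ((2:ℝ)/3) = 1 + -(1/3) by norm_num, Real.rpow_add hcpos, Real.rpow_one]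
  have h4 : c ^ (-(1/3) - 1 : ℝ) * a ^ 4 = 1 := by
    rw [hadef, ← Real.rpow_natCast (c ^ ((1:ℝ)/3)) 4, ← Real.rpow_mul hcpos.le,
      ← Real.rpow_add hcpos]
    norm_num
  have hs : Real.sinh x ^ 2 = c ^ 2 - 1 := by
    nlinarith [Real.cosh_sq_sub_sinh_sq x]
  have amgm : a ^ 4 ≤ 2/3 * c ^ 2 + 1/3 := by
    have h := Real.geom_mean_le_arith_mean2_weighted (by norm_num : (0:ℝ) ≤ 2/3)
      (by norm_num : (0:ℝ) ≤ 1/3) (by positivity : (0:ℝ) ≤ c ^ 2)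
      (by norm_num : (0:ℝ) ≤ (1:ℝ)) (by norm_num)
    calc a ^ 4 = (c ^ 2) ^ ((2:ℝ)/3) * 1 ^ ((1:ℝ)/3) := by
          rw [Real.one_rpow, mul_one, ← Real.rpow_natCast c 2, ← Real.rpow_mul hcpos.le,
            hadef, ← Real.rpow_natCast (c ^ ((1:ℝ)/3)) 4, ← Real.rpow_mul hcpos.le]
          norm_num
      _ ≤ 2/3 * c ^ 2 + 1/3 * 1 := h
      _ = 2/3 * c ^ 2 + 1/3 := by ring
  have ha4 : (0:ℝ) < a ^ 4 := by positivity
  nlinarith [mul_pos ha4 ha4, sq_nonneg (a ^ 2 - 1), mul_le_mul_of_nonneg_left amgm ha4.le]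

private lemma sinh_ge (t : ℝ) (ht : 0 ≤ t) :
    t ≤ Real.sinh t * Real.cosh t ^ (-(1/3) : ℝ) := by
  set F : ℝ → ℝ := fun x => Real.sinh x * Real.cosh x ^ (-(1/3) : ℝ) - x with hF
  have hmono : MonotoneOn F (Set.Ici 0) := by
    apply monotoneOn_of_deriv_nonneg (convex_Ici 0)
    · exact Continuous.continuousOn
        ((Real.continuous_sinh.mul (Real.continuous_cosh.rpow_const
          fun x => Or.inl (Real.cosh_pos x).ne')).sub continuous_id)
    · intro x _
      exact (coshdev x).differentiableAt.differentiableWithinAt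
    · intro x _
      rw [(coshdev x).deriv]
      exact dev_ge x
  have h0 : F 0 = 0 := by simp [hF]
  have := hmono (Set.self_mem_Ici) (Set.mem_Ici.mpr ht) ht
  rw [h0] at this
  simpa [hF, sub_nonneg] using this

theorem cosh_le_sinh_div_cubed (t : ℝ) (ht : 0 < t) :
    Real.cosh t ≤ (Real.sinh t / t) ^ 3 := by
  have hcpos : 0 < Real.cosh t := Real.cosh_pos t
  have key : t * Real.cosh t ^ ((1:ℝ)/3) ≤ Real.sinh t := by
    have h := sinh_ge t ht.le
    have hpos : (0:ℝ) < Real.cosh t ^ ((1:ℝ)/3) := Real.rpow_pos_of_pos hcpos _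
    have hinv : Real.cosh t ^ (-(1/3) : ℝ) * Real.cosh t ^ ((1:ℝ)/3) = 1 := by
      rw [← Real.rpow_add hcpos]; norm_num
    calc t * Real.cosh t ^ ((1:ℝ)/3)
        ≤ (Real.sinh t * Real.cosh t ^ (-(1/3) : ℝ)) * Real.cosh t ^ ((1:ℝ)/3) := by
          exact mul_le_mul_of_nonneg_right h hpos.le
      _ = Real.sinh t := by rw [mul_assoc, hinv, mul_one]
  have hnn : 0 ≤ t * Real.cosh t ^ ((1:ℝ)/3) := by positivity
  have cube := pow_le_pow_left₀ hnn key 3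
  have hcube : (t * Real.cosh t ^ ((1:ℝ)/3)) ^ 3 = t ^ 3 * Real.cosh t := by
    rw [mul_pow, ← Real.rpow_natCast (Real.cosh t ^ ((1:ℝ)/3)) 3,
      ← Real.rpow_mul hcpos.le]
    norm_num
  rw [hcube] at cube
  rw [div_pow, le_div_iff₀ (by positivity)]
  linarith
end

section
/- The function $h:(0,\infty)\to\mathbb{R}$, $h(t)=\frac{1}{t}-\frac{1}{e^t-1}$, extended by $h(0)=1/2$, is continuous and convex on $[0,\infty)$. -/
/-!
Away from `0`, `1 / (exp t - 1) = (coth (t / 2) - 1) / 2`, so the second derivative of the function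
is `2 / t ^ 3 - cosh (t / 2) / (4 * sinh (t / 2) ^ 3)`, which is nonnegative by Lazarević's
inequality `x ^ 3 * cosh x ≤ sinh x ^ 3`. That inequality says `x ≤ sinh x * cosh x ^ (-1/3)`;
both sides vanish at `0` and the derivative of the right-hand side is at least `1` by AM-GM,
`cosh x ^ (4/3) ≤ (2 * cosh x ^ 2 + 1) / 3`. Continuity at `0` comes from
`1 / t - 1 / (exp t - 1) = (exp t - 1 - t) / t ^ 2 * (t / (exp t - 1))` and the Taylor expansion of
`exp` at `0`.
-/

open Real Set Filter Topology

lemma rpow_four_thirds_le {c : ℝ} (hc : 0 ≤ c) : c ^ (4 / 3 : ℝ) ≤ (2 * c ^ 2 + 1) / 3 := by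
  have amgm := geom_mean_le_arith_mean2_weighted (w₁ := 2 / 3) (w₂ := 1 / 3) (p₁ := c ^ 2)
    (p₂ := 1) (by norm_num) (by norm_num) (by positivity) zero_le_one (by norm_num)
  rw [one_rpow, mul_one, ← rpow_natCast, ← rpow_mul hc] at amgm
  norm_num at amgm
  linarith

lemma hasDerivAt_sinh_mul_cosh_rpow (x : ℝ) :
    HasDerivAt (fun y => sinh y * cosh y ^ (-(1 / 3) : ℝ))
      (cosh x * cosh x ^ (-(1 / 3) : ℝ) +
        sinh x * (sinh x * (-(1 / 3)) * cosh x ^ (-(1 / 3) - 1 : ℝ))) x :=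
  (hasDerivAt_sinh x).mul ((hasDerivAt_cosh x).rpow_const (Or.inl (cosh_pos x).ne'))

lemma one_le_deriv_sinh_mul_cosh_rpow (x : ℝ) :
    1 ≤ cosh x * cosh x ^ (-(1 / 3) : ℝ) +
        sinh x * (sinh x * (-(1 / 3)) * cosh x ^ (-(1 / 3) - 1 : ℝ)) := by
  set c := cosh x
  have hc : 0 < c := cosh_pos x
  have h₁ : c ^ (-(1 / 3) : ℝ) = c ^ (-(4 / 3) : ℝ) * c := by
    rw [← rpow_add_one hc.ne']; norm_num
  have h₂ : c ^ (-(1 / 3) - 1 : ℝ) = c ^ (-(4 / 3) : ℝ) := by norm_num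
  have h₃ : c ^ (-(4 / 3) : ℝ) * c ^ (4 / 3 : ℝ) = 1 := by
    rw [rpow_neg hc.le, inv_mul_cancel₀ (by positivity)]
  have hsinh : sinh x ^ 2 = c ^ 2 - 1 := by rw [cosh_sq x]; ring
  calc (1 : ℝ) = c ^ (-(4 / 3) : ℝ) * c ^ (4 / 3 : ℝ) := h₃.symm
    _ ≤ c ^ (-(4 / 3) : ℝ) * ((2 * c ^ 2 + 1) / 3) := by
        gcongr; exact rpow_four_thirds_le hc.le
    _ = _ := by rw [h₁, h₂]; linear_combination (c ^ (-(4 / 3) : ℝ) / 3) * hsinh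

theorem pow_three_mul_cosh_le_sinh_pow_three {x : ℝ} (hx : 0 ≤ x) :
    x ^ 3 * cosh x ≤ sinh x ^ 3 := by
  have hmono := monotone_of_hasDerivAt_nonneg
    (fun y => hasDerivAt_sinh_mul_cosh_rpow y |>.sub (hasDerivAt_id y))
    (fun y => sub_nonneg.2 (one_le_deriv_sinh_mul_cosh_rpow y))
  have hle : x ≤ sinh x * cosh x ^ (-(1 / 3) : ℝ) := by
    simpa using hmono hx
  have hc : 0 < cosh x := cosh_pos x
  have hcube : (cosh x ^ (-(1 / 3) : ℝ)) ^ 3 = (cosh x)⁻¹ := by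
    rw [← rpow_natCast, ← rpow_mul hc.le]; norm_num [rpow_neg_one]
  have hle3 := pow_le_pow_left₀ hx hle 3
  rw [mul_pow, hcube, ← div_eq_mul_inv, le_div_iff₀ hc] at hle3
  exact hle3

noncomputable def invSubInvExpSubOne (t : ℝ) : ℝ :=
  if t = 0 then 1 / 2 else 1 / t - 1 / (exp t - 1)

lemma exp_sub_one_ne_zero {t : ℝ} (ht : t ≠ 0) : exp t - 1 ≠ 0 :=
  sub_ne_zero.2 ((exp_eq_one_iff t).not.2 ht)

lemma exp_div_exp_sub_one_sq (t : ℝ) :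
    exp t / (exp t - 1) ^ 2 = (4 * sinh (t / 2) ^ 2)⁻¹ := by
  have hsq : exp (t / 2) * exp (t / 2) = exp t := by rw [← exp_add, add_halves]
  have hinv : exp (t / 2) * exp (-(t / 2)) = 1 := by rw [← exp_add, add_neg_cancel, exp_zero]
  have h : (exp t - 1) ^ 2 = exp t * (4 * sinh (t / 2) ^ 2) := by
    rw [sinh_eq, ← hsq]
    linear_combination (2 * exp (t / 2) ^ 2 - 1 - exp (t / 2) * exp (-(t / 2))) * hinv
  rw [h, div_mul_cancel_left₀ (exp_pos t).ne']

lemma tendsto_exp_sub_one_sub_div_sq :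
    Tendsto (fun t => (exp t - 1 - t) / t ^ 2) (𝓝[≠] 0) (𝓝 (1 / 2)) := by
  have h := ((exp_sub_sum_range_succ_isLittleO_pow 2).tendsto_div_nhds_zero.mono_left
    (nhdsWithin_le_nhds (s := {0}ᶜ))).add_const (1 / 2)
  rw [zero_add] at h
  refine h.congr' (eventually_nhdsWithin_of_forall fun t (ht : t ≠ 0) => ?_)
  simp only [Finset.sum_range_succ, Finset.sum_range_zero]
  field_simp
  ring

lemma tendsto_exp_sub_one_div :
    Tendsto (fun t => (exp t - 1) / t) (𝓝[≠] 0) (𝓝 1) := by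
  have h := hasDerivAt_iff_tendsto_slope_zero.1 (hasDerivAt_exp 0)
  simp only [zero_add, exp_zero, smul_eq_mul] at h
  simpa only [div_eq_inv_mul] using h

lemma tendsto_invSubInvExpSubOne_zero :
    Tendsto invSubInvExpSubOne (𝓝[≠] 0) (𝓝 (1 / 2)) := by
  have h := tendsto_exp_sub_one_sub_div_sq.div tendsto_exp_sub_one_div one_ne_zero
  rw [div_one] at h
  refine h.congr' (eventually_nhdsWithin_of_forall fun t (ht : t ≠ 0) => ?_)
  have hexp := exp_sub_one_ne_zero ht
  simp only [Pi.div_apply, invSubInvExpSubOne, ht, if_false]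
  field_simp

lemma invSubInvExpSubOne_eventuallyEq {t : ℝ} (ht : t ≠ 0) :
    invSubInvExpSubOne =ᶠ[𝓝 t] fun s => s⁻¹ - (exp s - 1)⁻¹ := by
  filter_upwards [isOpen_ne.mem_nhds ht] with s (hs : s ≠ 0)
  simp [invSubInvExpSubOne, hs]

noncomputable def invSubInvExpSubOneDeriv (t : ℝ) : ℝ :=
  -(t ^ 2)⁻¹ + (4 * sinh (t / 2) ^ 2)⁻¹

lemma hasDerivAt_invSubInvExpSubOne {t : ℝ} (ht : t ≠ 0) :
    HasDerivAt invSubInvExpSubOne (invSubInvExpSubOneDeriv t) t := by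
  have h := (hasDerivAt_inv ht).sub
    (((hasDerivAt_exp t).sub_const 1).inv (exp_sub_one_ne_zero ht))
  rw [neg_div, sub_neg_eq_add, exp_div_exp_sub_one_sq] at h
  exact h.congr_of_eventuallyEq (invSubInvExpSubOne_eventuallyEq ht)

lemma hasDerivAt_invSubInvExpSubOneDeriv {t : ℝ} (ht : t ≠ 0) :
    HasDerivAt invSubInvExpSubOneDeriv (2 / t ^ 3 - cosh (t / 2) / (4 * sinh (t / 2) ^ 3)) t := by
  have hsinh : sinh (t / 2) ≠ 0 := sinh_ne_zero.2 (div_ne_zero ht two_ne_zero)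
  have h := ((hasDerivAt_pow 2 t).fun_inv (pow_ne_zero 2 ht)).fun_neg.fun_add
    ((((hasDerivAt_id' t).div_const 2).sinh.fun_pow 2).const_mul 4 |>.fun_inv
      (mul_ne_zero four_ne_zero (pow_ne_zero 2 hsinh)))
  refine h.congr_deriv ?_
  field_simp
  ring

theorem continuous_invSubInvExpSubOne : Continuous invSubInvExpSubOne := by
  refine continuous_iff_continuousAt.2 fun t => ?_
  rcases eq_or_ne t 0 with rfl | ht
  · refine continuousWithinAt_compl_self.1 ?_
    simpa [ContinuousWithinAt, invSubInvExpSubOne] using tendsto_invSubInvExpSubOne_zero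
  · exact (hasDerivAt_invSubInvExpSubOne ht).continuousAt

lemma cosh_half_div_sinh_half_pow_three_le {t : ℝ} (ht : 0 < t) :
    cosh (t / 2) / (4 * sinh (t / 2) ^ 3) ≤ 2 / t ^ 3 := by
  have hx : 0 < t / 2 := half_pos ht
  have hcube : cosh (t / 2) * t ^ 3 = 8 * ((t / 2) ^ 3 * cosh (t / 2)) := by ring
  rw [div_le_div_iff₀ (by positivity) (by positivity), hcube]
  linarith [pow_three_mul_cosh_le_sinh_pow_three hx.le]

theorem convexOn_invSubInvExpSubOne : ConvexOn ℝ (Ici 0) invSubInvExpSubOne := by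
  refine convexOn_of_hasDerivWithinAt2_nonneg (f' := invSubInvExpSubOneDeriv)
    (f'' := fun s => 2 / s ^ 3 - cosh (s / 2) / (4 * sinh (s / 2) ^ 3)) (convex_Ici 0)
    continuous_invSubInvExpSubOne.continuousOn ?_ ?_ ?_ <;>
    rw [interior_Ici] <;> intro t (ht : 0 < t)
  · exact (hasDerivAt_invSubInvExpSubOne ht.ne').hasDerivWithinAt
  · exact (hasDerivAt_invSubInvExpSubOneDeriv ht.ne').hasDerivWithinAt
  · exact sub_nonneg.2 (cosh_half_div_sinh_half_pow_three_le ht)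

theorem h_continuous_convex :
    ContinuousOn (fun t : ℝ => if t = 0 then 1 / 2 else 1 / t - 1 / (Real.exp t - 1))
      (Set.Ici (0 : ℝ)) ∧
    ConvexOn ℝ (Set.Ici (0 : ℝ))
      (fun t : ℝ => if t = 0 then 1 / 2 else 1 / t - 1 / (Real.exp t - 1)) :=
  ⟨continuous_invSubInvExpSubOne.continuousOn, convexOn_invSubInvExpSubOne⟩
end

section
/- Let $0<a<b$ and set $A=(a+b)/2$, $G=\sqrt{ab}$, $w_0(\tau)=\frac{2A\tau}{G^2+\tau^2}$. Then $\int_a^b \frac{1}{\sqrt{w_0(\tau)^2-1}}\,\frac{d\tau}{\tau}=\pi$. -/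
/-!
Since `w₀(τ)² - 1 = Q(τ) / (ab + τ²)²` with `Q(τ) = (τ² - a²)(b² - τ²)`, the integrand is
`τ / √Q + ab / (τ √Q)`. The first term has antiderivative `θ(τ) / 2`, where `sin θ` is the affine
function of `τ²` equal to `-1` at `a` and `1` at `b`; the involution `τ ↦ ab / τ` of `[a, b]`
turns it into the second term, with antiderivative `-θ(ab / τ) / 2`. Each contributes `π / 2`.
As the integrand is nonnegative, an antiderivative continuous on `[a, b]` also gives integrability.
-/

open Real Set

noncomputable def chordAngle (a b y : ℝ) : ℝ :=
  arcsin ((2 * y ^ 2 - a ^ 2 - b ^ 2) / (b ^ 2 - a ^ 2))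

section

variable {a b x : ℝ}

theorem continuous_chordAngle (a b : ℝ) : Continuous (chordAngle a b) :=
  continuous_arcsin.comp (by fun_prop)

theorem chordAngle_left (h : a ^ 2 ≠ b ^ 2) : chordAngle a b a = -(π / 2) := by
  rw [chordAngle, show (2 * a ^ 2 - a ^ 2 - b ^ 2) / (b ^ 2 - a ^ 2) = -1 by
    rw [div_eq_iff (sub_ne_zero.2 h.symm)]; ring, arcsin_neg_one]

theorem chordAngle_right (h : a ^ 2 ≠ b ^ 2) : chordAngle a b b = π / 2 := by
  rw [chordAngle, show (2 * b ^ 2 - a ^ 2 - b ^ 2) / (b ^ 2 - a ^ 2) = 1 by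
    rw [div_eq_one_iff_eq (sub_ne_zero.2 h.symm)]; ring, arcsin_one]

theorem hasDerivAt_chordAngle (ha : a ^ 2 < x ^ 2) (hb : x ^ 2 < b ^ 2) :
    HasDerivAt (chordAngle a b) (2 * x / √((x ^ 2 - a ^ 2) * (b ^ 2 - x ^ 2))) x := by
  have hd : 0 < b ^ 2 - a ^ 2 := by linarith
  have hQ : 0 < √((x ^ 2 - a ^ 2) * (b ^ 2 - x ^ 2)) :=
    sqrt_pos.2 (mul_pos (by linarith) (by linarith))
  set u := (2 * x ^ 2 - a ^ 2 - b ^ 2) / (b ^ 2 - a ^ 2) with hu_def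
  have hu : HasDerivAt (fun y => (2 * y ^ 2 - a ^ 2 - b ^ 2) / (b ^ 2 - a ^ 2))
      (4 * x / (b ^ 2 - a ^ 2)) x := by
    refine ((((hasDerivAt_pow 2 x).const_mul 2).sub_const (a ^ 2)).sub_const
      (b ^ 2)).div_const (b ^ 2 - a ^ 2) |>.congr_deriv ?_
    ring
  have hlo : -1 < u := by rw [hu_def, lt_div_iff₀ hd]; linarith
  have hhi : u < 1 := by rw [hu_def, div_lt_one hd]; linarith
  have hsqrt : √(1 - u ^ 2) = 2 / (b ^ 2 - a ^ 2) * √((x ^ 2 - a ^ 2) * (b ^ 2 - x ^ 2)) := by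
    rw [← sqrt_sq (by positivity : 0 ≤ 2 / (b ^ 2 - a ^ 2)), ← sqrt_mul (sq_nonneg _), hu_def]
    congr 1
    field_simp
    ring
  refine ((hasDerivAt_arcsin hlo.ne' hhi.ne).comp x hu).congr_deriv ?_
  rw [hsqrt]
  field_simp
  ring

theorem hasDerivAt_chordAngle_mul_div (ha : 0 < a) (hax : a < x) (hxb : x < b) :
    HasDerivAt (fun y => chordAngle a b (a * b / y))
      (-(2 * a * b / (x * √((x ^ 2 - a ^ 2) * (b ^ 2 - x ^ 2))))) x := by
  have hb : 0 < b := ha.trans (hax.trans hxb)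
  have hx : 0 < x := ha.trans hax
  have hlo : a ^ 2 < (a * b / x) ^ 2 := by
    gcongr
    rw [lt_div_iff₀ hx]
    nlinarith
  have hhi : (a * b / x) ^ 2 < b ^ 2 := by
    gcongr
    rw [div_lt_iff₀ hx]
    nlinarith
  -- `y ↦ ab / y` swaps the factors `x² - a²` and `b² - x²` up to the factor `(ab / x²)²`
  have hsqrt : √(((a * b / x) ^ 2 - a ^ 2) * (b ^ 2 - (a * b / x) ^ 2))
      = a * b / x ^ 2 * √((x ^ 2 - a ^ 2) * (b ^ 2 - x ^ 2)) := by
    rw [← sqrt_sq (by positivity : 0 ≤ a * b / x ^ 2), ← sqrt_mul (sq_nonneg _)]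
    congr 1
    field_simp
  have hQ : 0 < √((x ^ 2 - a ^ 2) * (b ^ 2 - x ^ 2)) :=
    sqrt_pos.2 (mul_pos (by nlinarith) (by nlinarith))
  have hinv : HasDerivAt (fun y => a * b / y) (-(a * b) / x ^ 2) x := by
    refine ((hasDerivAt_const x (a * b)).div (hasDerivAt_id x) hx.ne').congr_deriv ?_
    simp
  refine ((hasDerivAt_chordAngle hlo hhi).comp x hinv).congr_deriv ?_
  rw [hsqrt]
  field_simp

theorem hasDerivAt_chordAngle_sub_chordAngle_mul_div (ha : 0 < a) (hax : a < x) (hxb : x < b) :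
    HasDerivAt (fun y => (chordAngle a b y - chordAngle a b (a * b / y)) / 2)
      ((a * b + x ^ 2) / (x * √((x ^ 2 - a ^ 2) * (b ^ 2 - x ^ 2)))) x := by
  have hx : 0 < x := ha.trans hax
  have hQ : 0 < √((x ^ 2 - a ^ 2) * (b ^ 2 - x ^ 2)) :=
    sqrt_pos.2 (mul_pos (by nlinarith) (by nlinarith))
  refine ((hasDerivAt_chordAngle (x := x) (by nlinarith) (by nlinarith)).sub
    (hasDerivAt_chordAngle_mul_div ha hax hxb)).div_const 2 |>.congr_deriv ?_
  field_simp
  ring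

theorem angle_integrand_eq (ha : 0 < a) (hax : a < x) (hxb : x < b) :
    1 / √((2 * ((a + b) / 2) * x / (√(a * b) ^ 2 + x ^ 2)) ^ 2 - 1) / x
      = (a * b + x ^ 2) / (x * √((x ^ 2 - a ^ 2) * (b ^ 2 - x ^ 2))) := by
  have hb : 0 < b := ha.trans (hax.trans hxb)
  have hx : 0 < x := ha.trans hax
  have hc : 0 < a * b + x ^ 2 := by positivity
  have hw : (2 * ((a + b) / 2) * x / (a * b + x ^ 2)) ^ 2 - 1
      = (x ^ 2 - a ^ 2) * (b ^ 2 - x ^ 2) / (a * b + x ^ 2) ^ 2 := by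
    field_simp
    ring
  rw [sq_sqrt (mul_pos ha hb).le, hw, sqrt_div' _ (sq_nonneg _), sqrt_sq hc.le]
  field_simp

end

theorem angle_integral_pi (a b : ℝ) (ha : 0 < a) (hab : a < b) :
    ∫ τ in a..b,
        1 / Real.sqrt ((2 * ((a + b) / 2) * τ / (Real.sqrt (a * b) ^ 2 + τ ^ 2)) ^ 2 - 1) / τ
      = Real.pi := by
  have hb : 0 < b := ha.trans hab
  have hsq : a ^ 2 ≠ b ^ 2 := by nlinarith
  set F : ℝ → ℝ := fun y => (chordAngle a b y - chordAngle a b (a * b / y)) / 2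
  have hF : ∀ x ∈ Ioo a b, HasDerivAt F
      (1 / √((2 * ((a + b) / 2) * x / (√(a * b) ^ 2 + x ^ 2)) ^ 2 - 1) / x) x :=
    fun x ⟨hax, hxb⟩ => angle_integrand_eq ha hax hxb ▸
      hasDerivAt_chordAngle_sub_chordAngle_mul_div ha hax hxb
  have hFcont : ContinuousOn F (Icc a b) := by
    have := continuous_chordAngle a b
    exact (this.continuousOn.sub (this.comp_continuousOn (continuousOn_const.div continuousOn_id
      fun y hy => (ha.trans_le hy.1).ne'))).div_const 2
  have hpos : ∀ x ∈ Ioo a b,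
      0 ≤ 1 / √((2 * ((a + b) / 2) * x / (√(a * b) ^ 2 + x ^ 2)) ^ 2 - 1) / x :=
    fun x hx => div_nonneg (by positivity) (ha.trans hx.1).le
  rw [intervalIntegral.integral_eq_sub_of_hasDerivAt_of_le hab.le hFcont hF
    ((intervalIntegrable_iff_integrableOn_Ioc_of_le hab.le).2
      (intervalIntegral.integrableOn_deriv_of_nonneg hFcont hF hpos))]
  simp only [F, mul_div_cancel_right₀ a hb.ne', mul_div_cancel_left₀ b ha.ne',
    chordAngle_left hsq, chordAngle_right hsq]
  ring
end

section
/- Let $0<a<b$, $A=(a+b)/2$, $G=\sqrt{ab}$, $\lambda=A/G$, and $w_0(\tau)=\frac{2A\tau}{G^2+\tau^2}$ for $\tau\in[a,b]$. Then the supremum of $w_0$ on $[a,b]$ equals $\lambda$, attained at $\tau=G$, and for $1\le t<\lambda$ the measure $\mu_{w_0}(t)$ of $\{\tau\in(a,b): w_0(\tau)>t\}$ with respect to $d\tau/\tau$ equals $2\log\big(\frac{\lambda+\sqrt{\lambda^2-t^2}}{t}\big)$. -/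
/-!
Clearing the denominator, `w₀ τ > t` becomes `t τ² - 2A τ + t G² < 0`, so `{w₀ > t}` is the
open interval between the roots `G (λ ∓ √(λ² - t²)) / t`, whose product is `G²`. For `t = 1`
the roots are `a` and `b` (as `a + b = 2A`, `ab = G²`), so for `t ≥ 1` the condition
`τ ∈ (a, b)` is automatic. Integrating `dτ/τ` gives the logarithm of the ratio of the roots,
which is the square of `(λ + √(λ² - t²)) / t`.
-/

open MeasureTheory Set Real

theorem div_sq_add_sq_le {A G : ℝ} (hA : 0 ≤ A) (hG : 0 < G) (τ : ℝ) :
    2 * A * τ / (G ^ 2 + τ ^ 2) ≤ A / G := by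
  rw [div_le_div_iff₀ (by positivity) hG]
  nlinarith [mul_nonneg hA (sq_nonneg (G - τ))]

theorem setOf_lt_div_sq_add_sq_eq_Ioo {t p A r₁ r₂ : ℝ} (ht : 0 < t) (hp : 0 < p)
    (hr : r₁ ≤ r₂) (hsum : t * (r₁ + r₂) = 2 * A) (hprod : r₁ * r₂ = p) :
    {τ : ℝ | t < 2 * A * τ / (p + τ ^ 2)} = Ioo r₁ r₂ := by
  ext τ
  have hfactor : 2 * A * τ - t * (p + τ ^ 2) = t * -((τ - r₁) * (τ - r₂)) := by
    rw [← hsum, ← hprod]; ring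
  rw [mem_ofPred_eq, lt_div_iff₀ (by positivity), ← sub_pos, hfactor,
    mul_pos_iff_of_pos_left ht, neg_pos, sub_mul_sub_neg_iff τ hr, mem_Ioo]

theorem sub_sqrt_mul_add_sqrt {x t : ℝ} (h : t ^ 2 ≤ x ^ 2) :
    (x - √(x ^ 2 - t ^ 2)) * (x + √(x ^ 2 - t ^ 2)) = t ^ 2 := by
  linear_combination -sq_sqrt (sub_nonneg.mpr h)

theorem setOf_lt_two_mul_mul_div_eq_Ioo {G lam t : ℝ} (hG : 0 < G) (ht : 0 < t)
    (htlam : t ≤ lam) :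
    {τ : ℝ | t < 2 * (G * lam) * τ / (G ^ 2 + τ ^ 2)} =
      Ioo (G * (lam - √(lam ^ 2 - t ^ 2)) / t) (G * (lam + √(lam ^ 2 - t ^ 2)) / t) := by
  have hroots := sub_sqrt_mul_add_sqrt (pow_le_pow_left₀ ht.le htlam 2)
  refine setOf_lt_div_sq_add_sq_eq_Ioo ht (pow_pos hG 2) ?_ ?_ ?_
  · gcongr; linarith [sqrt_nonneg (lam ^ 2 - t ^ 2)]
  · field_simp; ring
  · calc _ = G ^ 2 * ((lam - √(lam ^ 2 - t ^ 2)) * (lam + √(lam ^ 2 - t ^ 2))) / t ^ 2 := by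
          ring
      _ = G ^ 2 := by rw [hroots, mul_div_cancel_right₀ _ (pow_ne_zero 2 ht.ne')]

theorem integral_Ioo_one_div {r₁ r₂ : ℝ} (h₁ : 0 < r₁) (h : r₁ ≤ r₂) :
    ∫ τ in Ioo r₁ r₂, 1 / τ = log (r₂ / r₁) := by
  rw [← integral_Ioc_eq_integral_Ioo, ← intervalIntegral.integral_of_le h,
    integral_one_div_of_pos h₁ (h₁.trans_le h)]

theorem distribution_function_of_w0 (a b : ℝ) (ha : 0 < a) (hab : a < b) :
    let A := (a + b) / 2
    let G := Real.sqrt (a * b)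
    let lam := A / G
    let w0 : ℝ → ℝ := fun τ => 2 * A * τ / (G ^ 2 + τ ^ 2)
    w0 G = lam ∧ (∀ τ ∈ Set.Icc a b, w0 τ ≤ lam) ∧
    ∀ t : ℝ, 1 ≤ t → t < lam →
      ∫ τ in {τ : ℝ | τ ∈ Set.Ioo a b ∧ w0 τ > t}, (1 / τ)
        = 2 * Real.log ((lam + Real.sqrt (lam ^ 2 - t ^ 2)) / t) := by
  intro A G lam w0
  have hab₀ : 0 < a * b := mul_pos ha (ha.trans hab)
  have hG : 0 < G := sqrt_pos.mpr hab₀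
  have hA : 0 < A := half_pos (by linarith)
  refine ⟨?_, fun τ _ => div_sq_add_sq_le hA.le hG τ, fun t ht1 htlam => ?_⟩
  · change 2 * A * G / (G ^ 2 + G ^ 2) = A / G
    field_simp
    ring
  have hsup_one : {τ | 1 < w0 τ} = Ioo a b :=
    setOf_lt_div_sq_add_sq_eq_Ioo one_pos (by positivity) hab.le (by ring)
      (sq_sqrt hab₀.le).symm
  have hset :
      {τ | τ ∈ Ioo a b ∧ w0 τ > t} = {τ | t < 2 * (G * lam) * τ / (G ^ 2 + τ ^ 2)} := by
    rw [← hsup_one, mul_div_cancel₀ A hG.ne']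
    exact Set.ext fun τ => ⟨fun h => h.2, fun h => ⟨(ht1.trans_lt h : 1 < w0 τ), h⟩⟩
  have ht : 0 < t := one_pos.trans_le ht1
  rw [hset, setOf_lt_two_mul_mul_div_eq_Ioo hG ht htlam.le]
  have hroots := sub_sqrt_mul_add_sqrt (pow_le_pow_left₀ ht.le htlam.le 2)
  set u := √(lam ^ 2 - t ^ 2)
  have hu : 0 ≤ u := sqrt_nonneg _
  have hlow : 0 < lam - u := by nlinarith
  rw [integral_Ioo_one_div (by positivity) (by gcongr; linarith)]
  have hratio : G * (lam + u) / t / (G * (lam - u) / t) = ((lam + u) / t) ^ 2 := by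
    field_simp
    linear_combination -(lam + u) * hroots
  rw [hratio, log_pow, Nat.cast_ofNat]
end

section
/- Let $(\alpha,\beta)\in\mathcal{P}$ with $\alpha<2\beta$, and let $0<a<b$. Define $\hat{m}:=(\alpha+2)\frac{b^{\beta+1}+a^{\beta+1}}{b^{\alpha+2}-a^{\alpha+2}}$. Then $\hat{m}<\frac{2(\beta+1)}{b^{\alpha-\beta+1}-a^{\alpha-\beta+1}}$. -/
theorem inequality_for_hat_m (α β a b : ℝ)
    (h1 : α - β + 1 > 0) (h2 : α < 2 * β) (h3 : α * (β + 1) ≤ β ^ 2)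
    (ha : 0 < a) (hab : a < b) :
    (α + 2) * (b ^ (β + 1) + a ^ (β + 1)) / (b ^ (α + 2) - a ^ (α + 2))
      < 2 * (β + 1) / (b ^ (α - β + 1) - a ^ (α - β + 1)) := by
  have hb : 0 < b := ha.trans hab
  have hp : (0:ℝ) < β + 1 := by linarith
  have hq : (0:ℝ) < α + 2 := by linarith
  have hd : (0:ℝ) < 2 * β - α := by linarith
  have hq1 : a ^ (α + 2) < b ^ (α + 2) := Real.rpow_lt_rpow ha.le hab hq
  have hr1 : a ^ (α - β + 1) < b ^ (α - β + 1) := Real.rpow_lt_rpow ha.le hab h1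
  have h5 : a ^ (2 * β - α) < b ^ (2 * β - α) := Real.rpow_lt_rpow ha.le hab hd
  have hbq : b ^ (β + 1) * b ^ (α - β + 1) = b ^ (α + 2) := by
    rw [← Real.rpow_add hb]; ring_nf
  have haq : a ^ (β + 1) * a ^ (α - β + 1) = a ^ (α + 2) := by
    rw [← Real.rpow_add ha]; ring_nf
  have hap : a ^ (β + 1) = a ^ (α - β + 1) * a ^ (2 * β - α) := by
    rw [← Real.rpow_add ha]; ring_nf
  have hbp : b ^ (β + 1) = b ^ (α - β + 1) * b ^ (2 * β - α) := by
    rw [← Real.rpow_add hb]; ring_nf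
  have par : 0 < a ^ (α - β + 1) := Real.rpow_pos_of_pos ha _
  have pbr : 0 < b ^ (α - β + 1) := Real.rpow_pos_of_pos hb _
  have pau : 0 < a ^ (2 * β - α) := Real.rpow_pos_of_pos ha _
  have pbv : 0 < b ^ (2 * β - α) := Real.rpow_pos_of_pos hb _
  rw [div_lt_div_iff₀ (by linarith) (by linarith), ← hbq, ← haq, hap, hbp]
  nlinarith [mul_pos par pau, mul_pos pbr pbv, mul_pos (mul_pos par pbr) (sub_pos.mpr h5),
    mul_lt_mul_of_pos_left hr1 (mul_pos par pau),
    mul_lt_mul_of_pos_right h5 (mul_pos pbr pbr),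
    mul_lt_mul_of_pos_right (mul_lt_mul_of_pos_left hr1 par) pau,
    mul_lt_mul_of_pos_right hr1 (mul_pos pbr pbv)]
end
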